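/- Let β be a harmonic noncommutative polynomial in two variables, homogeneous of degree d ≥ 2. Then β can be uniquely written as β = x_1·f + x_2·g where f, g are harmonic homogeneous polynomials of degree d−1 satisfying D[f, x_1, h] = −D[g, x_2, h]. -/

import Mathlib

noncomputable section

/-- Variables: `some i` is `xᵢ`, `none` is the direction variable `h`. -/
abbrev Var (g : ℕ) := Option (Fin g)

/-- Noncommutative polynomials `ℝ⟨x₁,…,x_g,h⟩`. -/
abbrev NC (g : ℕ) := MonoidAlgebra ℝ (FreeMonoid (Var g))

/-- The monomial corresponding to a word. -/
def mono (g : ℕ) (w : List (Var g)) : NC g :=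
  MonoidAlgebra.of ℝ (FreeMonoid (Var g)) (FreeMonoid.ofList w)

/-- The generator `xᵢ`. -/
def Xv (g : ℕ) (i : Fin g) : NC g := mono g [some i]

/-- The direction variable `h`. -/
def Hv (g : ℕ) : NC g := mono g [none]

/-- Directional derivative of a word in `xᵢ` in direction `h`: sum of the
terms obtained by replacing one occurrence of `xᵢ` by `h`. -/
def wordD (g : ℕ) (i : Fin g) : List (Var g) → NC g
  | [] => 0
  | a :: w =>
      (if a = some i then mono g (none :: w) else 0) + mono g [a] * wordD g i w

/-- Directional derivative `D[p, xᵢ, h]`, extended linearly from words. -/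
def D (g : ℕ) (i : Fin g) (p : NC g) : NC g :=
  Finsupp.sum p.coeff fun w c => c • wordD g i (FreeMonoid.toList w)

/-- The noncommutative Laplacian `Lap[p,h] := ∑ᵢ D[D[p,xᵢ,h],xᵢ,h]`. -/
def Lap (g : ℕ) (p : NC g) : NC g := ∑ i : Fin g, D g i (D g i p)

/-- The transpose: linear anti-automorphism reversing words and fixing generators. -/
def transp (g : ℕ) (p : NC g) : NC g :=
  MonoidAlgebra.ofCoeff (Finsupp.mapDomain (fun w => FreeMonoid.ofList (FreeMonoid.toList w).reverse) p.coeff)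

/-- Evaluation of a polynomial at a tuple of matrices (one for each variable). -/
def eval (g n : ℕ) (M : Var g → Matrix (Fin n) (Fin n) ℝ) (p : NC g) :
    Matrix (Fin n) (Fin n) ℝ :=
  Finsupp.sum p.coeff fun w c => c • ((FreeMonoid.toList w).map M).prod

/-- `p` is a polynomial in `x₁,…,x_g` only (the variable `h` does not occur). -/
def NoH (g : ℕ) (p : NC g) : Prop :=
  ∀ w ∈ p.coeff.support, none ∉ FreeMonoid.toList w

/-- `p` is a homogeneous polynomial of degree `d` in the variables `x₁,…,x_g`. -/
def HomogX (g : ℕ) (d : ℕ) (p : NC g) : Prop :=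
  ∀ w ∈ p.coeff.support, none ∉ FreeMonoid.toList w ∧ (FreeMonoid.toList w).length = d


/-! Peeling off the first letter of every monomial, `β = x₁·f + x₂·g` with `f`, `g` the left
quotients of `β` by `x₁`, `x₂`; this representation is unique because left quotients recover
the coefficients. A derivative acting on the first letter produces `h`, so
`Lap (xⱼ·p) = 2·h·D[p, xⱼ, h] + xⱼ·Lap p`, and hence
`0 = Lap β = 2·h·(D[f, x₁, h] + D[g, x₂, h]) + x₁·Lap f + x₂·Lap g`.
Taking left quotients by `h`, `x₁`, `x₂` separates the three conditions. -/

section LeftQuotient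

variable {g : ℕ}

lemma mono_singleton (a : Var g) :
    mono g [a] = MonoidAlgebra.single (FreeMonoid.of a) 1 := rfl

/-- The left quotient `a⁻¹p` of `p` by the letter `a`. -/
def leftQuot (g : ℕ) (a : Var g) : NC g →ₗ[ℝ] NC g where
  toFun p := MonoidAlgebra.ofCoeff
    (p.coeff.comapDomain (FreeMonoid.of a * ·) (mul_right_injective _).injOn)
  map_add' _ _ := by ext; rfl
  map_smul' _ _ := by ext; rfl

lemma coeff_leftQuot (a : Var g) (p : NC g) (u : FreeMonoid (Var g)) :
    (leftQuot g a p).coeff u = p.coeff (FreeMonoid.of a * u) := rfl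

lemma leftQuot_mono_mul (a b : Var g) (p : NC g) :
    leftQuot g a (mono g [b] * p) = if b = a then p else 0 := by
  ext u
  rw [coeff_leftQuot, mono_singleton]
  split_ifs with hba
  · rw [hba, MonoidAlgebra.coeff_single_mul_mul, one_mul]
  · refine MonoidAlgebra.coeff_single_mul_of_forall_mul_ne _ _ fun v hv => hba ?_
    have hlist := congrArg FreeMonoid.toList hv
    simp only [FreeMonoid.toList_mul, FreeMonoid.toList_of, List.singleton_append,
      List.cons.injEq] at hlist
    exact hlist.1

lemma ext_of_leftQuot {p q : NC g} (h1 : p.coeff 1 = q.coeff 1)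
    (hq : ∀ a, leftQuot g a p = leftQuot g a q) : p = q := by
  ext w
  cases w using FreeMonoid.casesOn with
  | one => exact h1
  | of_mul a u => exact congrArg (MonoidAlgebra.coeff · u) (hq a)

lemma HomogX.noH {d : ℕ} {p : NC g} (hp : HomogX g d p) : NoH g p :=
  fun w hw => (hp w hw).1

lemma HomogX.coeff_one {d : ℕ} {p : NC g} (hp : HomogX g d p) (hd : d ≠ 0) :
    p.coeff 1 = 0 := by
  by_contra h
  exact hd (hp 1 (Finsupp.mem_support_iff.mpr h)).2.symm

lemma NoH.leftQuot_none {p : NC g} (hp : NoH g p) : leftQuot g none p = 0 := by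
  ext u
  by_contra h
  exact hp _ (Finsupp.mem_support_iff.mpr h) List.mem_cons_self

lemma homogX_leftQuot {d : ℕ} {p : NC g} (hp : HomogX g d p) (a : Var g) :
    HomogX g (d - 1) (leftQuot g a p) := by
  intro u hu
  rw [Finsupp.mem_support_iff, coeff_leftQuot] at hu
  obtain ⟨hnone, hlen⟩ := hp _ (Finsupp.mem_support_iff.mpr hu)
  refine ⟨fun hu' => hnone (List.mem_cons_of_mem _ hu'), ?_⟩
  simp only [FreeMonoid.toList_mul, FreeMonoid.toList_of, List.singleton_append,
    List.length_cons] at hlen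
  omega

lemma HomogX.eq_sum_Xv_mul_leftQuot {d : ℕ} {p : NC g} (hp : HomogX g d p) (hd : d ≠ 0) :
    p = ∑ i, Xv g i * leftQuot g (some i) p := by
  refine ext_of_leftQuot ?_ fun a => ?_
  · rw [hp.coeff_one hd, MonoidAlgebra.coeff_sum, Finset.sum_apply']
    refine (Finset.sum_eq_zero fun i _ => ?_).symm
    refine MonoidAlgebra.coeff_single_mul_of_forall_mul_ne _ _ fun v hv => ?_
    simpa using congrArg FreeMonoid.toList hv
  · simp only [map_sum, Xv, leftQuot_mono_mul]
    cases a with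
    | none => simp [hp.noH.leftQuot_none]
    | some j => simp

end LeftQuotient

section Derivative

variable {g : ℕ}

lemma D_add (i : Fin g) (p q : NC g) : D g i (p + q) = D g i p + D g i q :=
  Finsupp.sum_add_index' (fun _ => zero_smul ℝ _) (fun _ c₁ c₂ => add_smul c₁ c₂ _)

lemma D_zero (i : Fin g) : D g i 0 = 0 := Finsupp.sum_zero_index

lemma D_single (i : Fin g) (w : FreeMonoid (Var g)) (c : ℝ) :
    D g i (MonoidAlgebra.single w c) = c • wordD g i (FreeMonoid.toList w) :=
  Finsupp.sum_single_index (zero_smul ℝ _)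

lemma D_mono_mul (i : Fin g) (b : Var g) (p : NC g) :
    D g i (mono g [b] * p) = (if b = some i then Hv g * p else 0) + mono g [b] * D g i p := by
  induction p using MonoidAlgebra.induction_linear with
  | zero => simp [D_zero]
  | add p q hp hq =>
    rw [mul_add, D_add, hp, hq, D_add, mul_add]
    split_ifs <;> simp only [mul_add] <;> abel
  | single w c =>
    rw [mono_singleton, MonoidAlgebra.single_mul_single, one_mul, D_single, D_single,
      FreeMonoid.toList_mul, FreeMonoid.toList_of, List.singleton_append, wordD, smul_add,
      mul_smul_comm, ← mono_singleton]
    congr 1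
    split_ifs
    · rw [Hv, mono_singleton, MonoidAlgebra.single_mul_single, one_mul, mono,
        MonoidAlgebra.of_apply, MonoidAlgebra.smul_single', mul_one]
      rfl
    · exact smul_zero c

lemma D_Hv_mul (i : Fin g) (p : NC g) : D g i (Hv g * p) = Hv g * D g i p := by
  simpa [Hv] using D_mono_mul i none p

lemma D_Xv_mul (i j : Fin g) (p : NC g) :
    D g i (Xv g j * p) = (if j = i then Hv g * p else 0) + Xv g j * D g i p := by
  simpa [Xv] using D_mono_mul i (some j) p

lemma D_D_Xv_mul (i j : Fin g) (p : NC g) :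
    D g i (D g i (Xv g j * p)) =
      (if j = i then (2 : ℝ) • (Hv g * D g i p) else 0) + Xv g j * D g i (D g i p) := by
  rw [D_Xv_mul, D_add, D_Xv_mul]
  split_ifs with hji
  · rw [D_Hv_mul, hji, two_smul]; abel
  · rw [D_zero, zero_add, zero_add]

lemma Lap_add (p q : NC g) : Lap g (p + q) = Lap g p + Lap g q := by
  simp only [Lap, D_add, Finset.sum_add_distrib]

lemma Lap_Xv_mul (j : Fin g) (p : NC g) :
    Lap g (Xv g j * p) = (2 : ℝ) • (Hv g * D g j p) + Xv g j * Lap g p := by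
  simp only [Lap, D_D_Xv_mul, Finset.sum_add_distrib, Finset.sum_ite_eq, Finset.mem_univ,
    if_true, Finset.mul_sum]

end Derivative

/-- unique decomposition `β = x₁·f + x₂·g` of a harmonic homogeneous
polynomial of degree `d ≥ 2` into harmonic homogeneous pieces of degree `d-1`
satisfying `D[f,x₁,h] = -D[g,x₂,h]`. -/
theorem harmonic_neighbor_decomposition (d : ℕ) (hd : 2 ≤ d) (β : NC 2)
    (hβhom : HomogX 2 d β) (hβharm : Lap 2 β = 0) :
    ∃! fg : NC 2 × NC 2,
      β = Xv 2 0 * fg.1 + Xv 2 1 * fg.2 ∧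
      HomogX 2 (d - 1) fg.1 ∧ HomogX 2 (d - 1) fg.2 ∧
      Lap 2 fg.1 = 0 ∧ Lap 2 fg.2 = 0 ∧
      D 2 0 fg.1 = - D 2 1 fg.2 := by
  set f := leftQuot 2 (some 0) β
  set g := leftQuot 2 (some 1) β
  have hdec : β = Xv 2 0 * f + Xv 2 1 * g := by
    simpa [Fin.sum_univ_two] using hβhom.eq_sum_Xv_mul_leftQuot (by omega)
  have hLap :
      (2 : ℝ) • (Hv 2 * (D 2 0 f + D 2 1 g)) + (Xv 2 0 * Lap 2 f + Xv 2 1 * Lap 2 g) = 0 := by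
    rw [← hβharm, hdec, Lap_add, Lap_Xv_mul, Lap_Xv_mul, mul_add, smul_add]
    abel
  have hquot (a : Var 2) := congrArg (leftQuot 2 a) hLap
  have hDsum := hquot none
  have hLf := hquot (some 0)
  have hLg := hquot (some 1)
  simp only [map_add, map_smul, map_zero, Xv, Hv, leftQuot_mono_mul, reduceCtorEq,
    Option.some.injEq, Fin.reduceEq, if_true, if_false, smul_zero, add_zero, zero_add]
    at hDsum hLf hLg
  have hD : D 2 0 f + D 2 1 g = 0 := (smul_eq_zero.mp hDsum).resolve_left two_ne_zero
  refine ⟨(f, g), ⟨hdec, homogX_leftQuot hβhom _, homogX_leftQuot hβhom _, hLf, hLg,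
    eq_neg_of_add_eq_zero_left hD⟩, ?_⟩
  rintro ⟨f', g'⟩ ⟨hdec', -⟩
  simp [f, g, hdec', Xv, leftQuot_mono_mul]
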